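/- arXiv:2411.00665 — 5 statements merged into one kernel-verified Lean document; each statement's English description precedes it below -/
import Mathlib

section
/- Let b ≥ 3 and r ≥ 1 be natural numbers, let m₀ and n be natural numbers, and let k : ℕ → ℕ be a sequence that is nondecreasing on the indices 0, 1, …, r−1. Assume k 0 ≥ 2, m₀ ≥ 3, n = m₀ + Σ_{j=0}^{r−1} k j, and (as rational numbers) r ≥ n/b + b/2 − 2. Then for every index j with j < r and j ≤ ⌊b/2⌋ − 1, one has 2 ≤ k j ≤ b − 1. -/
/-!
If some `k j` with `j < b / 2` were at least `b`, monotonicity would give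
`n ≥ m₀ + 2 j + b (r - j)`. Feeding this into `r ≥ n / b + b / 2 - 2` leaves
`(b - 2) j ≥ b² / 2 - 2 b + 3 = (b - 2)² / 2 + 1`, while `2 j + 2 ≤ b` gives
`(b - 2) j ≤ (b - 2)² / 2`.
-/

open Finset

theorem nsmul_add_nsmul_le_sum_range {M : Type*} [AddCommMonoid M] [PartialOrder M]
    [IsOrderedAddMonoid M] {f : ℕ → M} {a c : M} {j r : ℕ} (hjr : j ≤ r)
    (hlow : ∀ i < j, a ≤ f i) (hhigh : ∀ i, j ≤ i → i < r → c ≤ f i) :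
    j • a + (r - j) • c ≤ ∑ i ∈ range r, f i := by
  rw [← sum_range_add_sum_Ico f hjr]
  refine add_le_add ?_ ?_
  · simpa using card_nsmul_le_sum (range j) f a fun i hi => hlow i (mem_range.1 hi)
  · simpa using card_nsmul_le_sum (Ico j r) f c fun i hi =>
      hhigh i (mem_Ico.1 hi).1 (mem_Ico.1 hi).2

theorem lt_div_add_half_sub_two {K : Type*} [Field K] [LinearOrder K] [IsStrictOrderedRing K]
    {b j r n : K} (hb : 0 < b) (hj : 0 ≤ j) (hjb : 2 * j + 2 ≤ b)
    (hn : 3 + 2 * j + b * (r - j) ≤ n) :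
    r < n / b + b / 2 - 2 := by
  have key : (r + 2 - b / 2) * b < n := by
    nlinarith [mul_le_mul_of_nonneg_left hjb (by linarith : (0 : K) ≤ b - 2)]
  linarith [(lt_div_iff₀ hb).2 key]

theorem codim_bounds_of_chain_general (b r m₀ n : ℕ) (k : ℕ → ℕ)
    (hb : 3 ≤ b)
    (hmono : ∀ i j : ℕ, i ≤ j → j < r → k i ≤ k j)
    (hk0 : 2 ≤ k 0) (hm₀ : 3 ≤ m₀)
    (hn : n = m₀ + ∑ j ∈ Finset.range r, k j)
    (hrge : (r : ℚ) ≥ (n : ℚ) / (b : ℚ) + (b : ℚ) / 2 - 2) :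
    ∀ j : ℕ, j < r → j ≤ b / 2 - 1 → 2 ≤ k j ∧ k j ≤ b - 1 := by
  intro j hjr hjb
  have hge_two : ∀ i < r, 2 ≤ k i := fun i hi => hk0.trans (hmono 0 i i.zero_le hi)
  refine ⟨hge_two j hjr, ?_⟩
  by_contra! hkj
  have hsum : j • 2 + (r - j) • b ≤ ∑ i ∈ range r, k i :=
    nsmul_add_nsmul_le_sum_range hjr.le (fun i hi => hge_two i (hi.trans hjr))
      fun i hji hir => (by omega : b ≤ k j).trans (hmono j i hji hir)
  rw [smul_eq_mul, smul_eq_mul] at hsum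
  have hnat : 3 + 2 * j + b * (r - j) ≤ n := by rw [hn, mul_comm b]; omega
  have hrat : (3 + 2 * j + b * (r - j) : ℚ) ≤ n := by
    rw [← Nat.cast_sub hjr.le]; exact_mod_cast hnat
  have hlt := lt_div_add_half_sub_two (by positivity) j.cast_nonneg
    (by exact_mod_cast (by omega : 2 * j + 2 ≤ b)) hrat
  linarith

/-- Arithmetic content of the bound on codimensions in a chain of fixed-point set components:
if `k 0 ≥ 2`, `m₀ ≥ 3`, `n = m₀ + ∑_{j<r} k j`, the `k j` are nondecreasing for `j < r`, and
`r ≥ n/b + b/2 − 2` (as rationals), then `2 ≤ k j ≤ b − 1` for all `j < r` with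
`j ≤ ⌊b/2⌋ − 1`. -/
theorem codim_bounds_of_chain (b r m₀ n : ℕ) (k : ℕ → ℕ)
    (hb : 3 ≤ b) (hr : 1 ≤ r)
    (hmono : ∀ i j : ℕ, i ≤ j → j < r → k i ≤ k j)
    (hk0 : 2 ≤ k 0) (hm₀ : 3 ≤ m₀)
    (hn : n = m₀ + ∑ j ∈ Finset.range r, k j)
    (hrge : (r : ℚ) ≥ (n : ℚ) / (b : ℚ) + (b : ℚ) / 2 - 2) :
    ∀ j : ℕ, j < r → j ≤ b / 2 - 1 → 2 ≤ k j ∧ k j ≤ b - 1 :=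
  codim_bounds_of_chain_general b r m₀ n k hb hmono hk0 hm₀ hn hrge
end

section
/- Let b ≥ 3 and r ≥ 1 be natural numbers, let m₀ and n be natural numbers, and let k : ℕ → ℕ be a sequence that is nondecreasing on the indices 0, 1, …, r−1. Assume k 0 ≥ 2, m₀ ≥ 3, n = m₀ + Σ_{j=0}^{r−1} k j, and (as rational numbers) r ≥ n/b + b/2 − 2. If l < r is an index with k l ≥ b, then l ≥ ⌊b/2⌋. -/
/-!
The codimensions before `l` are at least `k 0 ≥ 2` and those from `l` on are at least `b`, so
`n ≥ 3 + 2l + b(r - l)`. Inserting this into `2br ≥ 2n + b² - 4b` leaves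
`(b - 2)² + 2 ≤ 2l(b - 2)`, which rules out `2l + 2 ≤ b`.
-/

open Finset

theorem div_two_le_of_sq_add_le {b l : ℕ} (h : b * b + 4 * l + 6 ≤ 2 * b * l + 4 * b) :
    b / 2 ≤ l := by
  by_contra! hlt
  obtain ⟨t, rfl⟩ : ∃ t, b = 2 * l + 2 + t := ⟨b - (2 * l + 2), by omega⟩
  nlinarith

theorem le_sum_range_of_le_of_le {k : ℕ → ℕ} {a c l r : ℕ} (hlr : l ≤ r)
    (ha : ∀ j < l, a ≤ k j) (hc : ∀ j, l ≤ j → j < r → c ≤ k j) :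
    a * l + c * (r - l) ≤ ∑ j ∈ range r, k j := by
  rw [← sum_range_add_sum_Ico k hlr]
  gcongr
  · simpa [mul_comm] using card_nsmul_le_sum (range l) k a fun j hj => ha j (mem_range.1 hj)
  · simpa [mul_comm] using
      card_nsmul_le_sum (Ico l r) k c fun j hj => hc j (mem_Ico.1 hj).1 (mem_Ico.1 hj).2

theorem index_lower_bound_of_large_codim_general (b r m₀ n : ℕ) (k : ℕ → ℕ)
    (hmono : ∀ i j : ℕ, i ≤ j → j < r → k i ≤ k j)
    (hk0 : 2 ≤ k 0) (hm₀ : 3 ≤ m₀)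
    (hn : n = m₀ + ∑ j ∈ Finset.range r, k j)
    (hrge : (r : ℚ) ≥ (n : ℚ) / (b : ℚ) + (b : ℚ) / 2 - 2)
    (l : ℕ) (hl : l < r) (hkl : b ≤ k l) :
    b / 2 ≤ l := by
  rcases b.eq_zero_or_pos with rfl | hb
  · simp
  have hsum : 2 * l + b * (r - l) ≤ ∑ j ∈ range r, k j :=
    le_sum_range_of_le_of_le hl.le (fun j hj => hk0.trans (hmono 0 j j.zero_le (hj.trans hl)))
      fun j hlj hjr => hkl.trans (hmono l j hlj hjr)
  have hcleared : 2 * n + b * b ≤ 2 * b * r + 4 * b := by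
    have hbq : (0 : ℚ) < b := by exact_mod_cast hb
    have h := mul_le_mul_of_nonneg_left hrge (by positivity : (0 : ℚ) ≤ 2 * b)
    field_simp at h
    exact_mod_cast (by linarith : (2 * n + b * b : ℚ) ≤ 2 * b * r + 4 * b)
  apply div_two_le_of_sq_add_le
  obtain ⟨s, rfl⟩ : ∃ s, r = l + s := ⟨r - l, by omega⟩
  rw [Nat.add_sub_cancel_left] at hsum
  nlinarith

/-- Arithmetic content of the bound on codimensions in a chain of fixed-point set components:
if `k 0 ≥ 2`, `m₀ ≥ 3`, `n = m₀ + ∑_{j<r} k j`, the `k j` are nondecreasing for `j < r`, and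
`r ≥ n/b + b/2 − 2` (as rationals), then any index `l < r` with `k l ≥ b` satisfies
`l ≥ ⌊b/2⌋`. -/
theorem index_lower_bound_of_large_codim (b r m₀ n : ℕ) (k : ℕ → ℕ)
    (hb : 3 ≤ b) (hr : 1 ≤ r)
    (hmono : ∀ i j : ℕ, i ≤ j → j < r → k i ≤ k j)
    (hk0 : 2 ≤ k 0) (hm₀ : 3 ≤ m₀)
    (hn : n = m₀ + ∑ j ∈ Finset.range r, k j)
    (hrge : (r : ℚ) ≥ (n : ℚ) / (b : ℚ) + (b : ℚ) / 2 - 2)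
    (l : ℕ) (hl : l < r) (hkl : b ≤ k l) :
    b / 2 ≤ l :=
  index_lower_bound_of_large_codim_general b r m₀ n k hmono hk0 hm₀ hn hrge l hl hkl
end

section
/- Let k ≥ 2 be a natural number. Then for every natural number n, the group cohomology H^n(ZMod k; ZMod k) of the cyclic group ZMod k with coefficients in the trivial module ZMod k is isomorphic to ZMod k as a ZMod k-module. -/
/-!
The periodic resolution of a finite cyclic group `G = ⟨g⟩` computes `Hⁿ(G, A)` as the homology
of `A --N--> A --(g - 1)--> A` for even `n > 0` and of `A --(g - 1)--> A --N--> A` for odd `n`.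
On a trivial module `g - 1` vanishes and the norm `N` is multiplication by `|G|`; when `|G|`
kills `A` (as `k` kills `ZMod k`) both maps are zero, so every `Hⁿ(G, A)` is `A` itself.
-/

universe u

open CategoryTheory

namespace Rep.FiniteCyclicGroup

variable {k G : Type u} [CommRing k] [CommGroup G] [Fintype G] {A : Type u} [AddCommGroup A]
  [Module k A]

omit [Fintype G] in
lemma applyAsHom_trivial_sub_id (g : G) : applyAsHom (trivial k G A) g - 𝟙 _ = 0 := by
  ext; simp [sub_hom, applyAsHom]

lemma norm_trivial_eq_zero (hA : ∀ a : A, Fintype.card G • a = 0) :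
    (trivial k G A).norm = 0 := by
  refine Rep.hom_ext ?_
  ext a
  simp [norm, Representation.norm, hA]

noncomputable def groupCohomologyTrivialIso (g : G) (hg : ∀ x, x ∈ Subgroup.zpowers g)
    (hA : ∀ a : A, Fintype.card G • a = 0) :
    (n : ℕ) → groupCohomology (trivial k G A) n ≅ ModuleCat.of k A
  | 0 => groupCohomology.H0IsoOfIsTrivial _
  | n + 1 =>
    if hn : Even (n + 1) then
      groupCohomologyIsoEven _ g hg (n + 1) hn ≪≫
        (ShortComplex.HomologyData.ofZeros _ (by simp [norm_trivial_eq_zero hA])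
          (by simp [applyAsHom_trivial_sub_id])).left.homologyIso
    else
      groupCohomologyIsoOdd _ g hg (n + 1) (Nat.not_even_iff_odd.mp hn) ≪≫
        (ShortComplex.HomologyData.ofZeros _ (by simp [applyAsHom_trivial_sub_id])
          (by simp [norm_trivial_eq_zero hA])).left.homologyIso

end Rep.FiniteCyclicGroup

/-- For `k ≥ 2`, the group cohomology `H^n(ZMod k; ZMod k)` of the cyclic group of order `k`
with coefficients in the trivial module `ZMod k` is isomorphic to `ZMod k` as a
`ZMod k`-module, for every `n`. -/
theorem groupCohomology_zmod_self_trivial (k : ℕ) (hk : 2 ≤ k) :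
    ∀ n : ℕ,
      Nonempty
        ((groupCohomology (Rep.trivial (ZMod k) (Multiplicative (ZMod k)) (ZMod k)) n)
          ≃ₗ[ZMod k] ZMod k) := by
  have : NeZero k := ⟨by omega⟩
  obtain ⟨g, hg⟩ := IsCyclic.exists_generator (α := Multiplicative (ZMod k))
  have hkill : ∀ a : ZMod k, Fintype.card (Multiplicative (ZMod k)) • a = 0 := by
    simp [ZMod.card]
  exact fun n => ⟨(Rep.FiniteCyclicGroup.groupCohomologyTrivialIso g hg hkill n).toLinearEquiv⟩
end

section
/- Let p : X̄ → X be a covering map and let x̄₀ ∈ X̄ with p(x̄₀) = x₀. Then the induced homomorphism p_* : π₁(X̄, x̄₀) → π₁(X, x₀) given by post-composition with p is injective, and for every k ≥ 2 the induced homomorphism p_* : π_k(X̄, x̄₀) → π_k(X, x₀) given by post-composition with p is a group isomorphism. -/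
open Topology

/-- The map on homotopy groups (with cube-indexing type `N`) induced by post-composition with
a continuous map `q : X → Y` sending the basepoint `x` to `y`. -/
def HomotopyGroup.inducedMap (N : Type*) {X Y : Type*} [TopologicalSpace X]
    [TopologicalSpace Y] (q : C(X, Y)) (x : X) (y : Y) (hqx : q x = y) :
    HomotopyGroup N X x → HomotopyGroup N Y y :=
  Quotient.map
    (fun f => ⟨q.comp f.1, fun z hz => by
      rw [ContinuousMap.comp_apply, f.2 z hz, hqx]⟩)
    (fun f g h => h.elim fun F => ⟨F.compContinuousMap q⟩)

/-!
Post-composition with `p` commutes with concatenation of cubes along a coordinate, so `p_*` is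
multiplicative. For injectivity, a homotopy rel boundary between `p ∘ f` and `p ∘ g` lifts to
one starting at `f`; its end is a lift of `p ∘ g` that agrees with `g` at the corner, hence
equals `g`. For surjectivity, every map of the cube lifts, because scaling towards the corner
is a homotopy from a constant map. When `k ≥ 2` the boundary of the cube is connected, so the
lift of a map sending the boundary to `x₀` is constant on the boundary, equal to `x̄₀`.
-/

open unitInterval Topology.Homotopy

namespace Cube

theorem isPreconnected_boundary (N : Type*) [Nontrivial N] :
    IsPreconnected (boundary N) := by
  classical
  let face (k : N) (c : I) : Set (N → I) := Set.range (Function.update · k c)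
  have face_subset (k : N) (c : I) (hc : c = 0 ∨ c = 1) : face k c ⊆ boundary N := by
    rintro _ ⟨z, rfl⟩
    exact ⟨k, by simpa using hc⟩
  have face_isPreconnected (k : N) (c : I) : IsPreconnected (face k c) :=
    isPreconnected_range (continuous_id.update k continuous_const)
  refine isPreconnected_of_forall (0 : N → I) fun y ⟨k, hk⟩ => ?_
  obtain ⟨l, hlk⟩ := exists_ne k
  -- the face through `y` meets the face `{y l = 0}`, which contains the corner `0`
  have corner : Function.update (0 : N → I) k (y k) ∈ face l 0 :=
    ⟨Function.update 0 k (y k), by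
      rw [Function.update_eq_self_iff, Function.update_of_ne hlk]; rfl⟩
  exact ⟨_, Set.union_subset (face_subset k (y k) hk) (face_subset l 0 (Or.inl rfl)),
    Or.inr ⟨0, Function.update_eq_self_iff.mpr rfl⟩, Or.inl ⟨y, Function.update_eq_self k y⟩,
    (face_isPreconnected k (y k)).union _ ⟨0, rfl⟩ corner (face_isPreconnected l 0)⟩

end Cube

namespace GenLoop

variable {N X Y : Type*} [TopologicalSpace X] [TopologicalSpace Y] {x : X} {y : Y}

def map (q : C(X, Y)) (h : q x = y) (f : Ω^ N X x) : Ω^ N Y y :=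
  ⟨q.comp f, fun z hz => by rw [ContinuousMap.comp_apply, f.2 z hz, h]⟩

@[simp]
theorem map_apply (q : C(X, Y)) (h : q x = y) (f : Ω^ N X x) (z : N → I) :
    map q h f z = q (f z) :=
  rfl

theorem map_transAt [DecidableEq N] (q : C(X, Y)) (h : q x = y) (i : N) (f g : Ω^ N X x) :
    map q h (transAt i f g) = transAt i (map q h f) (map q h g) := by
  ext z
  simp only [map_apply, transAt, coe_copy, apply_ite q]

end GenLoop

namespace HomotopyGroup

variable {N X Y : Type*} [TopologicalSpace X] [TopologicalSpace Y]

theorem inducedMap_mk (q : C(X, Y)) (x : X) (y : Y) (h : q x = y) (f : Ω^ N X x) :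
    inducedMap N q x y h ⟦f⟧ = ⟦GenLoop.map q h f⟧ :=
  rfl

theorem inducedMap_mul [DecidableEq N] [Nonempty N] (q : C(X, Y)) (x : X) (y : Y) (h : q x = y)
    (a b : HomotopyGroup N X x) :
    inducedMap N q x y h (a * b) = inducedMap N q x y h a * inducedMap N q x y h b := by
  induction a, b using Quotient.inductionOn₂ with | _ f g
  let i := Classical.arbitrary N
  simp only [mul_spec (i := i), inducedMap_mk, GenLoop.map_transAt]
  rfl

end HomotopyGroup

namespace IsCoveringMap

variable {E X : Type*} [TopologicalSpace E] [TopologicalSpace X] {p : E → X}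

theorem exists_lift_cube (hp : IsCoveringMap p) {N : Type*} (f : C(N → I, X)) (e : E)
    (he : p e = f 0) : ∃ F : C(N → I, E), p ∘ F = f ∧ F 0 = e := by
  -- coordinatewise scaling `(t, y) ↦ f (t • y)` contracts `f` to the constant map at `f 0`
  let H : C(I × (N → I), X) := f.comp ⟨fun ty i => ty.1 * ty.2 i, by fun_prop⟩
  have H_zero (y : N → I) : H (0, y) = p e := by
    simp only [H, ContinuousMap.comp_apply, ContinuousMap.coe_mk, zero_mul, he]; rfl
  let G := hp.liftHomotopy H (.const _ e) H_zero
  have G_lifts (ty : I × (N → I)) : p (G ty) = H ty :=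
    congr_fun (hp.liftHomotopy_lifts H _ H_zero) ty
  refine ⟨G.comp ⟨fun y => (1, y), by fun_prop⟩, funext fun y => ?_, ?_⟩
  · simp [G_lifts, H]
  · have G_corner : ∀ t t' : I, p (G (t, 0)) = p (G (t', 0)) := by
      simp [G_lifts, H]
    exact (hp.const_of_comp (by fun_prop) G_corner 1 0).trans
      (hp.liftHomotopy_zero H _ H_zero 0)

theorem injective_inducedMap_homotopyGroup (hp : IsCoveringMap p) (N : Type*) [Nonempty N]
    (e : E) (x : X) (he : p e = x) :
    Function.Injective (HomotopyGroup.inducedMap N ⟨p, hp.continuous⟩ e x he) := by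
  intro a b
  induction a, b using Quotient.inductionOn₂ with | _ f g
  intro hfg
  have corner : (0 : N → I) ∈ Cube.boundary N := ⟨Classical.arbitrary N, Or.inl rfl⟩
  exact Quotient.sound <| (hp.homotopicRel_iff_comp
    ⟨0, corner, (f.2 0 corner).trans (g.2 0 corner).symm⟩).mpr (Quotient.exact hfg)

theorem surjective_inducedMap_homotopyGroup (hp : IsCoveringMap p) (N : Type*) [Nontrivial N]
    (e : E) (x : X) (he : p e = x) :
    Function.Surjective (HomotopyGroup.inducedMap N ⟨p, hp.continuous⟩ e x he) := by
  intro c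
  induction c using Quotient.inductionOn with | _ γ
  have corner : (0 : N → I) ∈ Cube.boundary N := ⟨Classical.arbitrary N, Or.inl rfl⟩
  obtain ⟨F, hF, hF0⟩ := hp.exists_lift_cube γ.1 e (he.trans (γ.2 0 corner).symm)
  have F_boundary (z : N → I) (hz : z ∈ Cube.boundary N) : F z = e :=
    (hp.constOn_of_comp (Cube.isPreconnected_boundary N) F.continuous.continuousOn
      (fun a ha a' ha' => by
        simp only [← Function.comp_apply (f := p), hF, γ.2 a ha, γ.2 a' ha'])
      hz corner).trans hF0
  exact ⟨⟦⟨F, F_boundary⟩⟧, congrArg _ (GenLoop.ext _ _ fun z => congr_fun hF z)⟩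

end IsCoveringMap

/-- If `p : X' → X` is a covering map with `p x' = x₀`, then the induced homomorphism
`π₁(X', x') → π₁(X, x₀)` is injective, and for every `k ≥ 2` (written `k = m + 2`) the induced
homomorphism `π_k(X', x') → π_k(X, x₀)` is a group isomorphism (a multiplicative bijection). -/
theorem isCoveringMap_inducedMap_homotopyGroup
    {X' X : Type*} [TopologicalSpace X'] [TopologicalSpace X]
    (p : X' → X) (hp : IsCoveringMap p) (x' : X') (x₀ : X) (hx : p x' = x₀) :
    (Function.Injective
        (HomotopyGroup.inducedMap (Fin 1) ⟨p, hp.continuous⟩ x' x₀ hx) ∧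
      ∀ a b : HomotopyGroup (Fin 1) X' x',
        HomotopyGroup.inducedMap (Fin 1) ⟨p, hp.continuous⟩ x' x₀ hx (a * b) =
          HomotopyGroup.inducedMap (Fin 1) ⟨p, hp.continuous⟩ x' x₀ hx a *
            HomotopyGroup.inducedMap (Fin 1) ⟨p, hp.continuous⟩ x' x₀ hx b) ∧
    ∀ m : ℕ,
      Function.Bijective
        (HomotopyGroup.inducedMap (Fin (m + 2)) ⟨p, hp.continuous⟩ x' x₀ hx) ∧
      ∀ a b : HomotopyGroup (Fin (m + 2)) X' x',
        HomotopyGroup.inducedMap (Fin (m + 2)) ⟨p, hp.continuous⟩ x' x₀ hx (a * b) =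
          HomotopyGroup.inducedMap (Fin (m + 2)) ⟨p, hp.continuous⟩ x' x₀ hx a *
            HomotopyGroup.inducedMap (Fin (m + 2)) ⟨p, hp.continuous⟩ x' x₀ hx b :=
  ⟨⟨hp.injective_inducedMap_homotopyGroup _ x' x₀ hx, HomotopyGroup.inducedMap_mul _ x' x₀ hx⟩,
    fun _ => ⟨⟨hp.injective_inducedMap_homotopyGroup _ x' x₀ hx,
      hp.surjective_inducedMap_homotopyGroup _ x' x₀ hx⟩, HomotopyGroup.inducedMap_mul _ x' x₀ hx⟩⟩
end

section
/- Let R be a commutative ring and let A be a commutative R-algebra with an ℕ-grading 𝒜 (a GradedAlgebra) such that the degree-0 component 𝒜 0 is spanned over R by the identity element 1. Let c and k be positive integers and let x ∈ 𝒜 k be a homogeneous element of degree k such that for every i with 0 ≤ i < c − k, multiplication by x maps 𝒜 i surjectively onto 𝒜 (i + k). Then for every positive integer i with i·k < c, the component 𝒜 (i·k) is spanned over R by the element x^i; in particular each such component is a cyclic R-module (of rank at most 1). -/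
/-- In an ℕ-graded commutative `R`-algebra whose degree-`0` component is spanned by `1`, if a
homogeneous element `x` of positive degree `k` is such that multiplication by `x` maps `𝒜 i`
onto `𝒜 (i + k)` for all `0 ≤ i < c - k`, then for every positive `i` with `i * k < c` the
component `𝒜 (i * k)` is spanned over `R` by `x ^ i` (in particular it is cyclic of rank at
most one). -/
theorem graded_component_span_pow_of_periodicity
    {R A : Type*} [CommRing R] [CommRing A] [Algebra R A]
    (𝒜 : ℕ → Submodule R A) [GradedAlgebra 𝒜]
    (h0 : 𝒜 0 = Submodule.span R {(1 : A)})
    (c k : ℕ) (hc : 0 < c) (hk : 0 < k)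
    (x : A) (hx : x ∈ 𝒜 k)
    (hsurj : ∀ i : ℕ, i < c - k → ∀ y ∈ 𝒜 (i + k), ∃ z ∈ 𝒜 i, x * z = y) :
    ∀ i : ℕ, 0 < i → i * k < c → 𝒜 (i * k) = Submodule.span R {x ^ i} := by
  intro i
  induction i with
  | zero => intro h; exact absurd h (lt_irrefl 0)
  | succ n ih =>
    intro _ hlt
    have hpow : x ^ (n + 1) ∈ 𝒜 ((n + 1) * k) := by
      simpa using SetLike.pow_mem_graded (n + 1) hx
    apply le_antisymm
    · intro y hy
      rcases Nat.eq_zero_or_pos n with rfl | hn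
      · have hck : (0 : ℕ) < c - k := by omega
        have hy' : y ∈ 𝒜 (0 + k) := by simpa using hy
        obtain ⟨z, hz, hxz⟩ := hsurj 0 hck y hy'
        rw [h0, Submodule.mem_span_singleton] at hz
        obtain ⟨r, rfl⟩ := hz
        rw [Submodule.mem_span_singleton]
        exact ⟨r, by rw [← hxz, pow_one]; simp [mul_smul_comm]⟩
      · have hlt' : n * k + k < c := by rw [Nat.succ_mul] at hlt; exact hlt
        have hnk : n * k < c - k := by omega
        have hy' : y ∈ 𝒜 (n * k + k) := by rwa [Nat.succ_mul] at hy
        obtain ⟨z, hz, hxz⟩ := hsurj (n * k) hnk y hy'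
        rw [ih hn (by omega), Submodule.mem_span_singleton] at hz
        obtain ⟨r, rfl⟩ := hz
        rw [Submodule.mem_span_singleton]
        exact ⟨r, by rw [← hxz, pow_succ']; simp [mul_smul_comm]⟩
    · rw [Submodule.span_le, Set.singleton_subset_iff]
      exact hpow
end
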